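/- arXiv:2512.13969 — 3 statements merged into one kernel-verified Lean document; each statement's English description precedes it below -/
import Mathlib

section
/- Define c(t,r) = ∑_{a=t}^r S(r,a)·C(a,t)·j^{r-a} for a fixed positive integer j. Then c satisfies the recurrence c(t,r) = c(t-1,r-1) + (j·t+1)·c(t,r-1) + j·(t+1)·c(t+1,r-1) for 1 ≤ t ≤ r, with boundary conditions c(r,r) = 1 for r ≥ 0 and c(t,r) = 0 when t > r. -/
open scoped BigOperators

/-- Stirling numbers of the second kind. -/
def stirling2 : ℕ → ℕ → ℕ
  | 0, 0 => 1
  | 0, _ + 1 => 0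
  | _ + 1, 0 => 0
  | n + 1, k + 1 => (k + 1) * stirling2 n (k + 1) + stirling2 n k

/-- `cSeq j t r = ∑_{a=t}^r S(r,a) C(a,t) j^{r-a}`. -/
def cSeq (j t r : ℕ) : ℕ :=
  ∑ a ∈ Finset.Icc t r, stirling2 r a * a.choose t * j ^ (r - a)

/-!
Split `S(s+1,a) = a S(s,a) + S(s,a-1)` in the sum defining `c(t+1,s+1)`. After Pascal's rule
`C(a+1,t+1) = C(a,t) + C(a,t+1)` the `S(s,a-1)` part gives `c(t,s) + c(t+1,s)`; in the `a S(s,a)`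
part, where `a ≤ s` so one factor `j` splits off, the absorption identity
`a C(a,t+1) = (t+1) C(a,t+1) + (t+2) C(a,t+2)` gives `j(t+1) c(t+1,s) + j(t+2) c(t+2,s)`.
-/

open Finset

lemma stirling2_eq_zero_of_lt : ∀ {n k : ℕ}, n < k → stirling2 n k = 0
  | 0, _ + 1, _ => rfl
  | n + 1, k + 1, h => by
    simp only [stirling2, stirling2_eq_zero_of_lt (by omega : n < k + 1),
      stirling2_eq_zero_of_lt (by omega : n < k), mul_zero]

lemma stirling2_self : ∀ n : ℕ, stirling2 n n = 1
  | 0 => rfl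
  | n + 1 => by simp [stirling2, stirling2_eq_zero_of_lt (Nat.lt_succ_self n), stirling2_self n]

lemma sum_range_stirling2_succ_smul {M : Type*} [AddCommMonoid M] (s : ℕ) (f : ℕ → M) :
    ∑ a ∈ range (s + 2), stirling2 (s + 1) a • f a
      = ∑ a ∈ range (s + 1), stirling2 s a • (a • f a + f (a + 1)) := by
  have hshift : ∑ a ∈ range (s + 1), ((a + 1) * stirling2 s (a + 1)) • f (a + 1)
      = ∑ a ∈ range (s + 1), stirling2 s a • a • f a := by
    have h := sum_range_succ' (fun a => stirling2 s a • a • f a) (s + 1)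
    rw [sum_range_succ, stirling2_eq_zero_of_lt (Nat.lt_succ_self s), zero_smul, add_zero,
      zero_smul, smul_zero, add_zero] at h
    rw [h]
    exact sum_congr rfl fun a _ => by rw [mul_comm, mul_smul]
  rw [sum_range_succ']
  simp only [stirling2, zero_smul, add_zero, add_smul, sum_add_distrib, hshift, smul_add]

lemma mul_choose_succ (a t : ℕ) :
    a * a.choose (t + 1) = (t + 1) * a.choose (t + 1) + (t + 2) * a.choose (t + 2) := by
  rcases le_or_gt (t + 1) a with h | h
  · rw [mul_comm (t + 2), Nat.choose_succ_right_eq, mul_comm (t + 1), ← Nat.mul_add,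
      Nat.add_sub_cancel' h, mul_comm]
  · simp only [Nat.choose_eq_zero_of_lt h, Nat.choose_eq_zero_of_lt (by omega : a < t + 2),
      mul_zero, add_zero]

lemma cSeq_eq_sum_range (j t r : ℕ) :
    cSeq j t r = ∑ a ∈ range (r + 1), stirling2 r a * a.choose t * j ^ (r - a) := by
  refine sum_subset (fun a ha => by simp only [mem_Icc, mem_range] at *; omega) fun a ha hat => ?_
  simp only [mem_Icc, mem_range] at ha hat
  rw [Nat.choose_eq_zero_of_lt (by omega), mul_zero, zero_mul]

lemma cSeq_succ_succ (j t s : ℕ) :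
    cSeq j (t + 1) (s + 1)
      = cSeq j t s + (j * (t + 1) + 1) * cSeq j (t + 1) s + j * (t + 2) * cSeq j (t + 2) s := by
  have hterm : ∀ a ∈ range (s + 1), stirling2 s a *
        (a * (a.choose (t + 1) * j ^ (s + 1 - a)) + (a + 1).choose (t + 1) * j ^ (s - a))
        = stirling2 s a * a.choose t * j ^ (s - a)
          + (j * (t + 1) + 1) * (stirling2 s a * a.choose (t + 1) * j ^ (s - a))
          + j * (t + 2) * (stirling2 s a * a.choose (t + 2) * j ^ (s - a)) := by
    intro a ha
    rw [Nat.sub_add_comm (Nat.lt_succ_iff.mp (mem_range.mp ha)), pow_succ, Nat.choose_succ_succ']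
    linear_combination (stirling2 s a * j ^ (s - a) * j) * mul_choose_succ a t
  calc cSeq j (t + 1) (s + 1)
      = ∑ a ∈ range (s + 2), stirling2 (s + 1) a • (a.choose (t + 1) * j ^ (s + 1 - a)) := by
        simp only [cSeq_eq_sum_range, smul_eq_mul, mul_assoc]
    _ = ∑ a ∈ range (s + 1), stirling2 s a *
          (a * (a.choose (t + 1) * j ^ (s + 1 - a)) + (a + 1).choose (t + 1) * j ^ (s - a)) := by
        rw [sum_range_stirling2_succ_smul]
        simp only [smul_eq_mul, Nat.add_sub_add_right]
    _ = _ := by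
        rw [sum_congr rfl hterm]
        simp only [sum_add_distrib, ← mul_sum, cSeq_eq_sum_range]

lemma cSeq_self (j r : ℕ) : cSeq j r r = 1 := by
  simp [cSeq, stirling2_self]

lemma cSeq_eq_zero_of_lt {j t r : ℕ} (h : r < t) : cSeq j t r = 0 := by
  rw [cSeq, Icc_eq_empty (by omega), sum_empty]

theorem cSeq_recurrence_general (j : ℕ) :
    (∀ t r : ℕ, 1 ≤ t → t ≤ r →
        cSeq j t r = cSeq j (t - 1) (r - 1) + (j * t + 1) * cSeq j t (r - 1)
          + j * (t + 1) * cSeq j (t + 1) (r - 1)) ∧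
    (∀ r : ℕ, cSeq j r r = 1) ∧
    (∀ t r : ℕ, r < t → cSeq j t r = 0) := by
  refine ⟨fun t r ht htr => ?_, cSeq_self j, fun t r h => cSeq_eq_zero_of_lt h⟩
  obtain ⟨u, rfl⟩ : ∃ u, t = u + 1 := ⟨t - 1, by omega⟩
  obtain ⟨s, rfl⟩ : ∃ s, r = s + 1 := ⟨r - 1, by omega⟩
  exact cSeq_succ_succ j u s

/-- The sequence `c(t,r) = ∑_{a=t}^r S(r,a) C(a,t) j^{r-a}` satisfies the recurrence
`c(t,r) = c(t-1,r-1) + (jt+1) c(t,r-1) + j(t+1) c(t+1,r-1)` for `1 ≤ t ≤ r`, with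
boundary conditions `c(r,r) = 1` and `c(t,r) = 0` for `t > r`. -/
theorem cSeq_recurrence (j : ℕ) (hj : 1 ≤ j) :
    (∀ t r : ℕ, 1 ≤ t → t ≤ r →
        cSeq j t r = cSeq j (t - 1) (r - 1) + (j * t + 1) * cSeq j t (r - 1)
          + j * (t + 1) * cSeq j (t + 1) (r - 1)) ∧
    (∀ r : ℕ, cSeq j r r = 1) ∧
    (∀ t r : ℕ, r < t → cSeq j t r = 0) :=
  cSeq_recurrence_general j
end

section
/- In the ring of symmetric functions over ℚ, for a fixed positive integer j and partitions α of n and β of n-j with n > j: p_j·((p_j^⊥ p_α) * p_β) = p_α * (p_j · p_β), where * denotes the Kronecker (internal) product on homogeneous symmetric functions and p_j^⊥ is the adjoint of multiplication by p_j with respect to the Hall inner product. -/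
/-!
Pairing against a fixed power sum `p_ν` and taking the Kronecker product with it are the same
linear functional up to the factor `p_ν`: `f ∗ p_ν = ⟨f, p_ν⟩ p_ν`, since both sides agree on the
power-sum basis. Hence `p_j^⊥ p_α ∗ p_β = ⟨p_α, p_j p_β⟩ p_β`, and both sides of the identity
equal `z_α p_α` when `α = β ∪ {j}` and vanish otherwise.
-/

open scoped BigOperators

/-- `zPart μ = ∏_i i^{m_i(μ)} m_i(μ)!`, where `m_i(μ)` is the multiplicity of the
part `i` in the partition (multiset of parts) `μ`. -/
def zPart (μ : Multiset ℕ) : ℚ :=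
  (μ.prod : ℚ) * ∏ i ∈ μ.toFinset, (Nat.factorial (μ.count i) : ℚ)

theorem kron_powerSum_eq_inner_smul {R : Type*} [CommRing R] [Algebra ℚ R]
    {p : Multiset ℕ → R} {z : Multiset ℕ → ℚ}
    (hspan : Submodule.span ℚ (p '' {μ : Multiset ℕ | ∀ x ∈ μ, 0 < x}) = ⊤)
    {kron : R →ₗ[ℚ] R →ₗ[ℚ] R}
    (hkron : ∀ μ ν : Multiset ℕ, (∀ x ∈ μ, 0 < x) → (∀ x ∈ ν, 0 < x) →
      kron (p μ) (p ν) = if μ = ν then z μ • p μ else 0)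
    {inner : R →ₗ[ℚ] R →ₗ[ℚ] ℚ}
    (hinner : ∀ μ ν : Multiset ℕ, (∀ x ∈ μ, 0 < x) → (∀ x ∈ ν, 0 < x) →
      inner (p μ) (p ν) = if μ = ν then z μ else 0)
    {ν : Multiset ℕ} (hν : ∀ x ∈ ν, 0 < x) (f : R) :
    kron f (p ν) = inner f (p ν) • p ν := by
  have hflip : kron.flip (p ν) = (inner.flip (p ν)).smulRight (p ν) := by
    refine LinearMap.ext_on hspan ?_
    rintro _ ⟨μ, hμ, rfl⟩
    simp only [LinearMap.flip_apply, LinearMap.smulRight_apply, hkron μ ν hμ hν,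
      hinner μ ν hμ hν]
    split_ifs with h
    · rw [h]
    · rw [zero_smul]
  exact LinearMap.congr_fun hflip f

theorem kronecker_tensor_identity_general
    (R : Type*) [CommRing R] [Algebra ℚ R]
    (p : Multiset ℕ → R)
    (hmul : ∀ μ ν : Multiset ℕ, (∀ x ∈ μ, 0 < x) → (∀ x ∈ ν, 0 < x) →
      p μ * p ν = p (μ + ν))
    (hspan : Submodule.span ℚ (p '' {μ : Multiset ℕ | ∀ x ∈ μ, 0 < x}) = ⊤)
    (kron : R →ₗ[ℚ] R →ₗ[ℚ] R)
    (hkron : ∀ μ ν : Multiset ℕ, (∀ x ∈ μ, 0 < x) → (∀ x ∈ ν, 0 < x) →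
      kron (p μ) (p ν) = if μ = ν then zPart μ • p μ else 0)
    (inner : R →ₗ[ℚ] R →ₗ[ℚ] ℚ)
    (hinner : ∀ μ ν : Multiset ℕ, (∀ x ∈ μ, 0 < x) → (∀ x ∈ ν, 0 < x) →
      inner (p μ) (p ν) = if μ = ν then zPart μ else 0)
    (j : ℕ) (hj : 1 ≤ j)
    (perp : R →ₗ[ℚ] R)
    (hperp : ∀ f g : R, inner (perp f) g = inner f (p {j} * g))
    (α β : Multiset ℕ) (hαpos : ∀ x ∈ α, 0 < x) (hβpos : ∀ x ∈ β, 0 < x) :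
    p {j} * kron (perp (p α)) (p β) = kron (p α) (p {j} * p β) := by
  have hjpos : ∀ x ∈ ({j} : Multiset ℕ), 0 < x := by simpa using Nat.lt_of_succ_le hj
  have hjβpos : ∀ x ∈ j ::ₘ β, 0 < x := Multiset.forall_mem_cons.mpr ⟨hj, hβpos⟩
  have hjβ : p {j} * p β = p (j ::ₘ β) := by
    rw [hmul {j} β hjpos hβpos, Multiset.singleton_add]
  rw [kron_powerSum_eq_inner_smul hspan hkron hinner hβpos, hperp, hjβ,
    hinner α _ hαpos hjβpos, hkron α _ hαpos hjβpos, mul_smul_comm, hjβ]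
  split_ifs with h
  · rw [h]
  · rw [zero_smul]

/-- The tensor identity `p_j (p_j^⊥ p_α * p_β) = p_α * (p_j p_β)` in the ring of
symmetric functions over `ℚ`, where `*` is the Kronecker (internal) product and
`p_j^⊥` is the adjoint of multiplication by `p_j` for the Hall inner product.
The ring of symmetric functions is axiomatized as a commutative `ℚ`-algebra `R`
with power-sum elements `p μ` (indexed by partitions, i.e. multisets of positive
integers) forming a basis, with `p μ * p ν = p (μ + ν)`, Kronecker product
`p_μ ∗ p_ν = δ_{μν} z_μ p_μ`, and Hall pairing `⟨p_μ, p_ν⟩ = δ_{μν} z_μ`. -/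
theorem kronecker_tensor_identity
    (R : Type*) [CommRing R] [Algebra ℚ R]
    (p : Multiset ℕ → R)
    (hmul : ∀ μ ν : Multiset ℕ, (∀ x ∈ μ, 0 < x) → (∀ x ∈ ν, 0 < x) →
      p μ * p ν = p (μ + ν))
    (hli : LinearIndependent ℚ (fun μ : {μ : Multiset ℕ // ∀ x ∈ μ, 0 < x} => p μ.1))
    (hspan : Submodule.span ℚ (p '' {μ : Multiset ℕ | ∀ x ∈ μ, 0 < x}) = ⊤)
    (kron : R →ₗ[ℚ] R →ₗ[ℚ] R)
    (hkron : ∀ μ ν : Multiset ℕ, (∀ x ∈ μ, 0 < x) → (∀ x ∈ ν, 0 < x) →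
      kron (p μ) (p ν) = if μ = ν then zPart μ • p μ else 0)
    (inner : R →ₗ[ℚ] R →ₗ[ℚ] ℚ)
    (hinner : ∀ μ ν : Multiset ℕ, (∀ x ∈ μ, 0 < x) → (∀ x ∈ ν, 0 < x) →
      inner (p μ) (p ν) = if μ = ν then zPart μ else 0)
    (j : ℕ) (hj : 1 ≤ j)
    (perp : R →ₗ[ℚ] R)
    (hperp : ∀ f g : R, inner (perp f) g = inner f (p {j} * g))
    (n : ℕ) (hn : j < n)
    (α β : Multiset ℕ) (hαpos : ∀ x ∈ α, 0 < x) (hβpos : ∀ x ∈ β, 0 < x)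
    (hα : α.sum = n) (hβ : β.sum = n - j) :
    p {j} * kron (perp (p α)) (p β) = kron (p α) (p {j} * p β) :=
  kronecker_tensor_identity_general R p hmul hspan kron hkron inner hinner j hj perp hperp α β hαpos
    hβpos
end

section
/- For j ≥ 2 and n ≥ 2j, the alternating sum of dimensions ∑_{i=0}^{j-1} (-1)^i · d_{(n-j, j-i, 1^i)} equals -1, where d_λ is the dimension of the irreducible representation of S_n indexed by λ (the number of standard Young tableaux of shape λ). -/
/-!
By the hook length formula, `d_(a, b, 1^i) = (a+b+i)! (a-b+1) / ((a+i+1) (b+i) a! (b-1)! i!)`.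
For `a = n - j`, `b = j - i` and `m = j - 1` this turns the `i`-th summand into
`C(n, j) (-1)^i C(m, i) (1 - j / (n - j + 1 + i))`. The alternating sum of the binomial
coefficients vanishes, and the partial fraction expansion
`∑ (-1)^i C(m, i) / (x + i) = m! / (x (x+1) ⋯ (x+m))` at `x = n - j + 1` leaves
`-C(n, j) j! (n-j)! / n! = -1`.
-/

open scoped BigOperators

/-- The number of standard Young tableaux of the shape given by the list of row
lengths `l`, via the hook-length formula `d_λ = |λ|! / ∏ h(□)`. -/
noncomputable def dSYT (l : List ℕ) : ℚ :=
  (Nat.factorial l.sum : ℚ) /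
    ∏ i ∈ Finset.range l.length, ∏ j ∈ Finset.range (l.getD i 0),
      ((l.getD i 0 : ℚ) - j + ((l.filter (fun r => decide (j < r))).length : ℚ) - i - 1)

open Finset Polynomial
open scoped Nat

theorem sum_range_alternating_choose_div {K : Type*} [Field K] (m : ℕ) (x : K)
    (hx : ∀ i ≤ m, x + i ≠ 0) :
    ∑ i ∈ range (m + 1), (-1) ^ i * m.choose i / (x + i) =
      m ! / (ascPochhammer K (m + 1)).eval x := by
  induction m generalizing x with
  | zero => simp
  | succ m ih =>
    -- Pascal's rule: the sum for `m + 1` at `x` is the sum for `m` at `x` minus that at `x + 1`.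
    have hpascal := sum_choose_succ_mul (fun i _ => (-1 : K) ^ i / (x + i)) m
    simp only [mul_div_assoc', mul_comm ((-1 : K) ^ _)] at hpascal ih ⊢
    have hshift : ∑ i ∈ range (m + 1), (m.choose i : K) * (-1) ^ (i + 1) / (x + ↑(i + 1)) =
        -∑ i ∈ range (m + 1), (m.choose i : K) * (-1) ^ i / (x + 1 + i) := by
      rw [← sum_neg_distrib]
      refine sum_congr rfl fun i _ => ?_
      push_cast
      ring
    set P := (ascPochhammer K (m + 1 + 1)).eval x
    have hP : P ≠ 0 := by
      rw [Ne, ascPochhammer_eval_eq_zero_iff]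
      rintro ⟨k, hk, hkx⟩
      exact hx k (by omega) (by rw [hkx]; ring)
    have hright : (m ! : K) / (ascPochhammer K (m + 1)).eval x * P = m ! * (x + (m + 1)) := by
      have : P = (ascPochhammer K (m + 1)).eval x * (x + (m + 1)) := by
        simp [P, ascPochhammer_succ_eval (m + 1) x]
      rw [this] at hP ⊢
      field_simp [left_ne_zero_of_mul hP]
    have hleft : (m ! : K) / (ascPochhammer K (m + 1)).eval (x + 1) * P = m ! * x := by
      have : P = x * (ascPochhammer K (m + 1)).eval (x + 1) := by
        simp [P, ascPochhammer_succ_left K (m + 1)]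
      rw [this] at hP ⊢
      field_simp [right_ne_zero_of_mul hP]
    rw [hpascal, hshift, ih x fun i hi => hx i (by omega),
      ih (x + 1) fun i hi => by simpa [add_assoc, add_comm (1 : K)] using hx (i + 1) (by omega),
      eq_div_iff hP, add_mul, neg_mul, hright, hleft]
    push_cast [Nat.factorial_succ]
    ring

theorem cast_factorial_mul_ascPochhammer_eval {K : Type*} [CommSemiring K] (a k : ℕ) :
    (a ! : K) * (ascPochhammer K k).eval ((a : K) + 1) = (a + k)! := by
  rw [← Nat.cast_add_one, ← ascPochhammer_eval_cast, ascPochhammer_nat_eq_ascFactorial,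
    ← Nat.cast_mul, Nat.factorial_mul_ascFactorial]

theorem cast_descFactorial_eq_prod_range_sub {K : Type*} [CommRing K] {x m : ℕ} (h : m ≤ x) :
    (x.descFactorial m : K) = ∏ c ∈ range m, ((x : K) - c) := by
  rw [Nat.descFactorial_eq_prod_range, Nat.cast_prod]
  exact prod_congr rfl fun c hc => Nat.cast_sub (by rw [mem_range] at hc; omega)

theorem cast_factorial_eq_prod_range_sub {K : Type*} [CommRing K] (x : ℕ) :
    (x ! : K) = ∏ c ∈ range x, ((x : K) - c) := by
  rw [← Nat.descFactorial_self, cast_descFactorial_eq_prod_range_sub le_rfl]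

/-- Arm `l[r] - c - 1` plus leg `l'[c] - r - 1` plus one, where the length `l'[c]` of column `c`
is the number of rows longer than `c`. -/
def hookLength (l : List ℕ) (r c : ℕ) : ℚ :=
  (l.getD r 0 : ℚ) - c + ((l.filter (fun s => decide (c < s))).length : ℚ) - r - 1

theorem dSYT_eq_factorial_div_prod_hookLength (l : List ℕ) :
    dSYT l =
      (l.sum ! : ℚ) / ∏ r ∈ range l.length, ∏ c ∈ range (l.getD r 0), hookLength l r c :=
  rfl

theorem length_filter_lt_hookShape (a b i c : ℕ) :
    ((a :: b :: List.replicate i 1).filter (fun s => decide (c < s))).length =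
      (if c < a then 1 else 0) + (if c < b then 1 else 0) + (if c = 0 then i else 0) := by
  rw [← List.countP_eq_length_filter, List.countP_cons, List.countP_cons, List.countP_replicate]
  simp only [decide_eq_true_eq, Nat.lt_one_iff]
  ring

section HookShape

variable {a b : ℕ} (i : ℕ)

theorem prod_hookLength_row_zero (hb : 1 ≤ b) (hba : b ≤ a) :
    ∏ c ∈ range a, hookLength (a :: b :: List.replicate i 1) 0 c =
      (a + i + 1) * a.descFactorial (b - 1) * (a - b)! := by
  obtain ⟨e, rfl⟩ : ∃ e, b = e + 1 := ⟨b - 1, by omega⟩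
  obtain ⟨d, rfl⟩ : ∃ d, a = e + d + 1 := ⟨a - (e + 1), by omega⟩
  set l := (e + d + 1) :: (e + 1) :: List.replicate i 1
  have hcorner : hookLength l 0 0 = e + d + 1 + i + 1 := by
    rw [hookLength, List.getD_cons_zero, length_filter_lt_hookShape, if_pos (by omega),
      if_pos (by omega), if_pos rfl]
    push_cast
    ring
  have harm : ∀ c ∈ range e, hookLength l 0 (c + 1) = ((e + d + 1 : ℕ) : ℚ) - c := by
    intro c hc
    rw [mem_range] at hc
    rw [hookLength, List.getD_cons_zero, length_filter_lt_hookShape, if_pos (by omega),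
      if_pos (by omega), if_neg (by omega)]
    push_cast
    ring
  have hfoot : ∀ c ∈ range d, hookLength l 0 (e + c + 1) = (d : ℚ) - c := by
    intro c hc
    rw [mem_range] at hc
    rw [hookLength, List.getD_cons_zero, length_filter_lt_hookShape, if_pos (by omega),
      if_neg (by omega), if_neg (by omega)]
    push_cast
    ring
  rw [prod_range_succ', prod_range_add, prod_congr rfl harm, prod_congr rfl hfoot, hcorner,
    cast_descFactorial_eq_prod_range_sub (by omega), show e + d + 1 - (e + 1) = d by omega,
    cast_factorial_eq_prod_range_sub, Nat.add_sub_cancel]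
  push_cast
  ring

theorem prod_hookLength_row_one (hb : 1 ≤ b) (hba : b ≤ a) :
    ∏ c ∈ range b, hookLength (a :: b :: List.replicate i 1) 1 c = (b + i) * (b - 1)! := by
  obtain ⟨e, rfl⟩ : ∃ e, b = e + 1 := ⟨b - 1, by omega⟩
  set l := a :: (e + 1) :: List.replicate i 1
  have hcorner : hookLength l 1 0 = e + 1 + i := by
    rw [hookLength, List.getD_cons_succ, List.getD_cons_zero, length_filter_lt_hookShape,
      if_pos (by omega), if_pos (by omega), if_pos rfl]
    push_cast
    ring
  have harm : ∀ c ∈ range e, hookLength l 1 (c + 1) = (e : ℚ) - c := by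
    intro c hc
    rw [mem_range] at hc
    rw [hookLength, List.getD_cons_succ, List.getD_cons_zero, length_filter_lt_hookShape,
      if_pos (by omega), if_pos (by omega), if_neg (by omega)]
    push_cast
    ring
  rw [prod_range_succ', prod_congr rfl harm, hcorner, cast_factorial_eq_prod_range_sub,
    Nat.add_sub_cancel]
  push_cast
  ring

theorem prod_hookLength_leg (hb : 1 ≤ b) (hba : b ≤ a) :
    ∏ k ∈ range i, hookLength (a :: b :: List.replicate i 1) (k + 2) 0 = i ! := by
  rw [cast_factorial_eq_prod_range_sub]
  refine prod_congr rfl fun k hk => ?_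
  rw [mem_range] at hk
  rw [hookLength, List.getD_cons_succ, List.getD_cons_succ, List.getD_replicate _ hk,
    length_filter_lt_hookShape, if_pos (by omega), if_pos (by omega), if_pos rfl]
  push_cast
  ring

theorem dSYT_hookShape (hb : 1 ≤ b) (hba : b ≤ a) :
    dSYT (a :: b :: List.replicate i 1) =
      (a + b + i)! * (a - b + 1 : ℚ) / ((a + i + 1) * (b + i) * a ! * (b - 1)! * i !) := by
  set l := a :: b :: List.replicate i 1
  have hrows : ∏ r ∈ range (i + 2), ∏ c ∈ range (l.getD r 0), hookLength l r c =
      (∏ k ∈ range i, hookLength l (k + 2) 0) * (∏ c ∈ range b, hookLength l 1 c) *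
        ∏ c ∈ range a, hookLength l 0 c := by
    rw [prod_range_succ', prod_range_succ']
    congr 2
    refine prod_congr rfl fun k hk => ?_
    rw [mem_range] at hk
    simp [l, hk]
  have hdesc : ((a - b + 1)! * a.descFactorial (b - 1) : ℚ) = a ! := by
    have := Nat.factorial_mul_descFactorial (show b - 1 ≤ a by omega)
    rw [show a - (b - 1) = a - b + 1 by omega] at this
    exact_mod_cast this
  have hdesc0 : (a.descFactorial (b - 1) : ℚ) ≠ 0 := by
    exact_mod_cast (Nat.descFactorial_pos.2 (by omega)).ne'
  have hab : (a : ℚ) - b + 1 ≠ 0 := by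
    rw [← Nat.cast_sub hba]
    positivity
  rw [dSYT_eq_factorial_div_prod_hookLength]
  simp only [l, List.sum_cons, List.sum_replicate, smul_eq_mul, mul_one, ← add_assoc,
    List.length_cons, List.length_replicate]
  rw [hrows, prod_hookLength_row_zero i hb hba, prod_hookLength_row_one i hb hba,
    prod_hookLength_leg i hb hba, ← hdesc, Nat.factorial_succ, Nat.cast_mul, Nat.cast_add_one,
    Nat.cast_sub hba]
  field_simp

end HookShape

theorem dSYT_hookShape_eq_choose {a j i : ℕ} (hij : i < j) (hja : j ≤ a + i) :
    dSYT (a :: (j - i) :: List.replicate i 1) =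
      (a + j).choose j * (j - 1).choose i * (1 - j / (a + 1 + i : ℚ)) := by
  obtain ⟨m, rfl⟩ : ∃ m, j = m + 1 := ⟨j - 1, by omega⟩
  rw [dSYT_hookShape i (by omega) (by omega), Nat.cast_choose ℚ (by omega),
    Nat.cast_choose ℚ (by omega), show a + (m + 1 - i) + i = a + (m + 1) by omega,
    Nat.add_sub_cancel, Nat.add_sub_cancel, show m + 1 - i - 1 = m - i by omega,
    Nat.cast_sub (by omega : i ≤ m + 1), Nat.factorial_succ]
  field_simp
  push_cast
  ring

/-- For `j ≥ 2` and `n ≥ 2j`, `∑_{i=0}^{j-1} (-1)^i d_{(n-j, j-i, 1^i)} = -1`. -/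
theorem alternating_dim_sum (n j : ℕ) (hj : 2 ≤ j) (hn : 2 * j ≤ n) :
    ∑ i ∈ Finset.range j,
        (-1 : ℚ) ^ i * dSYT ((n - j) :: (j - i) :: List.replicate i 1) = -1 := by
  obtain ⟨a, rfl⟩ : ∃ a, n = a + j := ⟨n - j, by omega⟩
  obtain ⟨m, rfl⟩ : ∃ m, j = m + 1 := ⟨j - 1, by omega⟩
  have hterm : ∀ i ∈ range (m + 1),
      (-1 : ℚ) ^ i * dSYT (a :: (m + 1 - i) :: List.replicate i 1) =
        (a + (m + 1)).choose (m + 1) *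
          ((-1) ^ i * m.choose i - (m + 1) * ((-1) ^ i * m.choose i / ((a : ℚ) + 1 + i))) := by
    intro i hi
    rw [mem_range] at hi
    rw [dSYT_hookShape_eq_choose hi (by omega)]
    push_cast
    ring
  have hbinom : ∑ i ∈ range (m + 1), (-1 : ℚ) ^ i * m.choose i = 0 := by
    exact_mod_cast Int.alternating_sum_range_choose_of_ne (n := m) (by omega)
  have hpoch : (ascPochhammer ℚ (m + 1)).eval ((a : ℚ) + 1) = (a + (m + 1))! / a ! :=
    eq_div_of_mul_eq (by positivity) <| by rw [mul_comm, cast_factorial_mul_ascPochhammer_eval]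
  rw [Nat.add_sub_cancel, sum_congr rfl hterm, ← mul_sum, sum_sub_distrib, ← mul_sum, hbinom,
    sum_range_alternating_choose_div m _ fun i _ => by positivity, hpoch,
    Nat.cast_choose ℚ (by omega), Nat.add_sub_cancel]
  push_cast [Nat.factorial_succ]
  field_simp
  ring
end
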